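/- arXiv:math/0306338 — 2 statements merged into one kernel-verified Lean document; each statement's English description precedes it below -/
import Mathlib

section
/- For r ≥ s ≥ 0 with r + s odd, ∂_□(m_{r,s}(x_1,x_2)) = 2 · Σ_{c+d = r+s-1, c,d ≥ s} (-1)^{c-s} x_1^c x_2^d, where ∂_□(f) = (f(x_1,x_2) - f(-x_2,-x_1))/(x_1+x_2). -/
open MvPolynomial

/-- The monomial symmetric function `m_{r,s}` in two variables. -/
noncomputable def mSym (r s : ℕ) : MvPolynomial (Fin 2) ℤ :=
  if r = s then X 0 ^ r * X 1 ^ r else X 0 ^ r * X 1 ^ s + X 0 ^ s * X 1 ^ r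

/-- The substitution `s_□ : (x_1, x_2) ↦ (-x_2, -x_1)`. -/
noncomputable def sBox : MvPolynomial (Fin 2) ℤ →ₐ[ℤ] MvPolynomial (Fin 2) ℤ :=
  MvPolynomial.aeval (fun i : Fin 2 => if i = 0 then -X 1 else -X 0)

lemma geo (n : ℕ) :
    (X 0 + X 1 : MvPolynomial (Fin 2) ℤ) *
      ∑ i ∈ Finset.range (n + 1), (-1 : MvPolynomial (Fin 2) ℤ) ^ i * X 0 ^ i * X 1 ^ (n - i) =
    (-1) ^ n * X 0 ^ (n + 1) + X 1 ^ (n + 1) := by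
  induction n with
  | zero => simp
  | succ n ih =>
    have hsum : ∑ i ∈ Finset.range (n + 1 + 1),
        (-1 : MvPolynomial (Fin 2) ℤ) ^ i * X 0 ^ i * X 1 ^ (n + 1 - i) =
        X 1 * (∑ i ∈ Finset.range (n + 1),
          (-1 : MvPolynomial (Fin 2) ℤ) ^ i * X 0 ^ i * X 1 ^ (n - i))
        + (-1) ^ (n + 1) * X 0 ^ (n + 1) := by
      rw [Finset.sum_range_succ, Finset.mul_sum]
      simp only [Nat.sub_self, pow_zero, mul_one]
      congr 1
      apply Finset.sum_congr rfl
      intro i hi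
      have hi' : i ≤ n := Nat.lt_succ_iff.mp (Finset.mem_range.mp hi)
      have : n + 1 - i = (n - i) + 1 := by omega
      rw [this]
      ring
    rw [hsum, mul_add, mul_comm (X 0 + X 1) (X 1 * _), mul_assoc, mul_comm _ (X 0 + X 1), ih]
    ring

/-- For `r ≥ s ≥ 0` with `r + s` odd,
`∂_□(m_{r,s}) = 2 Σ_{c+d=r+s-1, c,d ≥ s} (-1)^{c-s} x_1^c x_2^d`,
stated via the defining property of the divided difference
`∂_□(f) = (f - s_□ f)/(x_1 + x_2)`:  the numerator equals `(x_1+x_2)` times the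
claimed value. -/
theorem statement2 (r s : ℕ) (hrs : s ≤ r) (hodd : (r + s) % 2 = 1) :
    mSym r s - sBox (mSym r s) =
      (X 0 + X 1) *
        (2 * ∑ c ∈ Finset.Icc s (r - 1),
          (-1 : MvPolynomial (Fin 2) ℤ) ^ (c - s) * X 0 ^ c * X 1 ^ (r + s - 1 - c)) := by
  have hne : r ≠ s := by omega
  have hm : mSym r s = X 0 ^ r * X 1 ^ s + X 0 ^ s * X 1 ^ r := by
    simp [mSym, hne]
  have hodd' : Odd (r + s) := Nat.odd_iff.mpr hodd
  have hs : sBox (mSym r s) = -(X 1 ^ r * X 0 ^ s + X 1 ^ s * X 0 ^ r) := by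
    rw [hm]
    simp only [sBox, map_add, map_mul, map_pow, aeval_X, if_pos, if_neg,
      show (0:Fin 2) = 0 from rfl, show (1:Fin 2) ≠ 0 from by decide, ite_true, ite_false]
    have key : ∀ a b : MvPolynomial (Fin 2) ℤ, (-a) ^ r * (-b) ^ s = -(a ^ r * b ^ s) := by
      intro a b
      rw [show (-a) = (-1) * a from by ring, show (-b) = (-1) * b from by ring,
        mul_pow, mul_pow, show ((-1:MvPolynomial (Fin 2) ℤ)) ^ r * a ^ r * ((-1) ^ s * b ^ s)
          = (-1) ^ (r + s) * (a ^ r * b ^ s) from by rw [pow_add]; ring,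
        hodd'.neg_one_pow]
      ring
    have key2 : ∀ a b : MvPolynomial (Fin 2) ℤ, (-a) ^ s * (-b) ^ r = -(a ^ s * b ^ r) := by
      intro a b
      have := key b a
      calc (-a) ^ s * (-b) ^ r = (-b) ^ r * (-a) ^ s := by ring
        _ = -(b ^ r * a ^ s) := this
        _ = -(a ^ s * b ^ r) := by ring
    rw [key, key2]
    ring
  rw [hs, hm]
  -- reindex the sum
  obtain ⟨n, hn⟩ : ∃ n, r = s + (n + 1) := ⟨r - s - 1, by omega⟩
  have hneven : n % 2 = 0 := by omega
  have hsum : ∑ c ∈ Finset.Icc s (r - 1),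
      (-1 : MvPolynomial (Fin 2) ℤ) ^ (c - s) * X 0 ^ c * X 1 ^ (r + s - 1 - c) =
      X 0 ^ s * X 1 ^ s * ∑ i ∈ Finset.range (n + 1),
        (-1 : MvPolynomial (Fin 2) ℤ) ^ i * X 0 ^ i * X 1 ^ (n - i) := by
    rw [Finset.mul_sum, show Finset.Icc s (r - 1) = Finset.Ico s r from by
        rw [← Finset.Ico_add_one_right_eq_Icc]; congr 1; omega,
      Finset.sum_Ico_eq_sum_range, show r - s = n + 1 from by omega]
    apply Finset.sum_congr rfl
    intro i hi
    have hi' : i ≤ n := Nat.lt_succ_iff.mp (Finset.mem_range.mp hi)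
    have e1 : s + i - s = i := by omega
    have e2 : r + s - 1 - (s + i) = s + (n - i) := by omega
    rw [e1, e2, pow_add, pow_add]
    ring
  rw [hsum]
  have := geo n
  have hpow : ((-1 : MvPolynomial (Fin 2) ℤ)) ^ n = 1 := by
    rw [(Nat.even_iff.mpr hneven).neg_one_pow]
  calc X 0 ^ r * X 1 ^ s + X 0 ^ s * X 1 ^ r - -(X 1 ^ r * X 0 ^ s + X 1 ^ s * X 0 ^ r)
      = 2 * (X 0 ^ s * X 1 ^ s * (X 0 ^ (n + 1) + X 1 ^ (n + 1))) := by
        rw [hn]; rw [pow_add, pow_add]; ring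
    _ = (X 0 + X 1) * (2 * (X 0 ^ s * X 1 ^ s *
          ∑ i ∈ Finset.range (n + 1),
            (-1 : MvPolynomial (Fin 2) ℤ) ^ i * X 0 ^ i * X 1 ^ (n - i))) := by
        rw [hpow, one_mul] at this
        rw [← this]; ring
end

section
/- For n ≥ 1, the set {Q̃_λ(X) : λ a partition with λ_1 ≤ n}, where Q̃_λ = 2^{ℓ(λ)} P̃_λ, is a free ℤ-basis of the ring ℤ[X]^{S_n} of symmetric polynomials in X = (x_1,...,x_n). -/
set_option synthInstance.maxHeartbeats 1000000
set_option maxHeartbeats 1000000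


open MvPolynomial

/-- `Q̃_i(X) = e_i(X)`, with `Q̃_i = 0` for `i < 0`. -/
noncomputable def QtOne (n : ℕ) (i : ℤ) : MvPolynomial (Fin n) ℤ :=
  if i < 0 then 0 else MvPolynomial.esymm (Fin n) ℤ i.toNat

/-- The two-row `Q̃`-polynomial
`Q̃_{i,j} = Q̃_i Q̃_j + 2 Σ_{k=1}^{j-1} (-1)^k Q̃_{i+k} Q̃_{j-k} + (-1)^j Q̃_{i+j}`,
with `Q̃_{i,0} = Q̃_i` and vanishing when an index is negative. -/
noncomputable def QtTwo (n : ℕ) (i j : ℤ) : MvPolynomial (Fin n) ℤ :=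
  if i < 0 ∨ j < 0 then 0
  else if j = 0 then QtOne n i
  else QtOne n i * QtOne n j
    + 2 * ∑ k ∈ Finset.Icc 1 (j.toNat - 1),
        (-1 : MvPolynomial (Fin n) ℤ) ^ k * QtOne n (i + k) * QtOne n (j - k)
    + (-1 : MvPolynomial (Fin n) ℤ) ^ j.toNat * QtOne n (i + j)

/-- The general `Q̃`-polynomial of a composition `ν`, via the Pfaffian recursion
`Q̃_ν = Σ_{j=1}^{m-1} (-1)^{j-1} Q̃_{ν_j,ν_m} Q̃_{ν∖{ν_j,ν_m}}`, where `ν` is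
padded with a zero part to have even length `m` (fuel-based recursion on the
length of the list). -/
noncomputable def QtAux (n : ℕ) : ℕ → List ℤ → MvPolynomial (Fin n) ℤ
  | _, [] => 1
  | _, [a] => QtOne n a
  | _, [a, b] => QtTwo n a b
  | 0, _ => 1
  | fuel + 1, ν =>
      let μ := if ν.length % 2 = 0 then ν else ν ++ [0]
      let m := μ.length
      ∑ j ∈ Finset.range (m - 1),
        (-1 : MvPolynomial (Fin n) ℤ) ^ j * QtTwo n (μ.getD j 0) (μ.getD (m - 1) 0)
          * QtAux n fuel ((μ.eraseIdx (m - 1)).eraseIdx j)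

noncomputable def Qt (n : ℕ) (ν : List ℤ) : MvPolynomial (Fin n) ℤ :=
  QtAux n ν.length ν


/-! auxiliary -/

noncomputable def eP (n : ℕ) (μ : Multiset ℕ) : MvPolynomial (Fin n) ℤ :=
  (μ.map (esymm (Fin n) ℤ)).prod

def wgt (μ : Multiset ℕ) : ℕ := (μ.map fun x => x * x).sum

def geSet (n d W : ℕ) : Set (MvPolynomial (Fin n) ℤ) :=
  {p | ∃ μ : Multiset ℕ, μ.sum = d ∧ W ≤ wgt μ ∧ p = eP n μ}

def hiSet (n d W : ℕ) : Set (MvPolynomial (Fin n) ℤ) :=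
  {p | ∃ μ : Multiset ℕ, μ.sum = d ∧ W < wgt μ ∧ p = eP n μ}

lemma eP_add (n : ℕ) (μ ν : Multiset ℕ) : eP n (μ + ν) = eP n μ * eP n ν := by
  simp [eP, Multiset.prod_add]

lemma eP_cons (n : ℕ) (a : ℕ) (μ : Multiset ℕ) :
    eP n (a ::ₘ μ) = esymm (Fin n) ℤ a * eP n μ := by simp [eP]

lemma wgt_add (μ ν : Multiset ℕ) : wgt (μ + ν) = wgt μ + wgt ν := by simp [wgt]

lemma wgt_cons (a : ℕ) (μ : Multiset ℕ) : wgt (a ::ₘ μ) = a * a + wgt μ := by simp [wgt]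

lemma hiSet_subset_geSet (n d W : ℕ) : hiSet n d W ⊆ geSet n d W :=
  fun _ ⟨μ, h1, h2, h3⟩ => ⟨μ, h1, h2.le, h3⟩

lemma mul_mem_span_ge {n d1 W1 d2 W2 : ℕ} {p q : MvPolynomial (Fin n) ℤ}
    (hp : p ∈ Submodule.span ℤ (geSet n d1 W1)) (hq : q ∈ Submodule.span ℤ (geSet n d2 W2)) :
    p * q ∈ Submodule.span ℤ (geSet n (d1 + d2) (W1 + W2)) := by
  have h := Submodule.mul_mem_mul hp hq
  rw [Submodule.span_mul_span] at h
  refine Submodule.span_le.mpr ?_ h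
  rintro x hx
  rw [Set.mem_mul] at hx
  obtain ⟨a, ⟨μ1, hs1, hw1, rfl⟩, b, ⟨μ2, hs2, hw2, rfl⟩, rfl⟩ := hx
  exact Submodule.subset_span ⟨μ1 + μ2, by simp [hs1, hs2], by rw [wgt_add]; omega,
    (eP_add n μ1 μ2).symm⟩

lemma mul_mem_span_hi {n d1 W1 d2 W2 : ℕ} {p q : MvPolynomial (Fin n) ℤ}
    (hp : p ∈ Submodule.span ℤ (hiSet n d1 W1)) (hq : q ∈ Submodule.span ℤ (geSet n d2 W2)) :
    p * q ∈ Submodule.span ℤ (hiSet n (d1 + d2) (W1 + W2)) := by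
  have h := Submodule.mul_mem_mul hp hq
  rw [Submodule.span_mul_span] at h
  refine Submodule.span_le.mpr ?_ h
  rintro x hx
  rw [Set.mem_mul] at hx
  obtain ⟨a, ⟨μ1, hs1, hw1, rfl⟩, b, ⟨μ2, hs2, hw2, rfl⟩, rfl⟩ := hx
  exact Submodule.subset_span ⟨μ1 + μ2, by simp [hs1, hs2], by rw [wgt_add]; omega,
    (eP_add n μ1 μ2).symm⟩

lemma mul_mem_span_ge_hi {n d1 W1 d2 W2 : ℕ} {p q : MvPolynomial (Fin n) ℤ}
    (hp : p ∈ Submodule.span ℤ (geSet n d1 W1)) (hq : q ∈ Submodule.span ℤ (hiSet n d2 W2)) :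
    p * q ∈ Submodule.span ℤ (hiSet n (d1 + d2) (W1 + W2)) := by
  rw [mul_comm, add_comm d1 d2, add_comm W1 W2]
  exact mul_mem_span_hi hq hp

lemma eP_pair (n a b : ℕ) : eP n {a, b} = esymm (Fin n) ℤ a * esymm (Fin n) ℤ b := by
  simp [eP]

lemma wgt_pair (a b : ℕ) : wgt {a, b} = a * a + b * b := by simp [wgt]

lemma qtOne_nonneg (n : ℕ) {i : ℤ} (h : 0 ≤ i) : QtOne n i = esymm (Fin n) ℤ i.toNat := by
  simp [QtOne, not_lt.mpr h]

lemma intCast_mul_mem_span {n : ℕ} {S : Set (MvPolynomial (Fin n) ℤ)} (c : ℤ)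
    {p : MvPolynomial (Fin n) ℤ} (hp : p ∈ Submodule.span ℤ S) :
    (c : MvPolynomial (Fin n) ℤ) * p ∈ Submodule.span ℤ S := by
  have : (c : MvPolynomial (Fin n) ℤ) * p = c • p := (zsmul_eq_mul _ _).symm
  rw [this]
  exact Submodule.smul_mem _ _ hp

lemma qtTwo_key (n : ℕ) {i j : ℤ} (hj : 0 ≤ j) (hij : j ≤ i) :
    QtTwo n i j - eP n {i.toNat, j.toNat}
      ∈ Submodule.span ℤ (hiSet n (i.toNat + j.toNat) (i.toNat * i.toNat + j.toNat * j.toNat)) := by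
  have hi : 0 ≤ i := le_trans hj hij
  rcases eq_or_lt_of_le hj with hj0 | hj0
  · have : QtTwo n i j = esymm (Fin n) ℤ i.toNat := by
      rw [QtTwo, if_neg (by omega), if_pos (by omega), qtOne_nonneg n hi]
    rw [this, eP_pair, ← hj0]
    simp
  · rw [QtTwo, if_neg (by omega), if_neg (by omega)]
    rw [qtOne_nonneg n hi, qtOne_nonneg n hj, eP_pair]
    rw [show ∀ (A B C : MvPolynomial (Fin n) ℤ), A + B + C - A = B + C from fun _ _ _ => by ring]
    apply Submodule.add_mem
    · rw [show (2 : MvPolynomial (Fin n) ℤ) = ((2:ℤ) : MvPolynomial (Fin n) ℤ) by push_cast; ring]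
      apply intCast_mul_mem_span
      apply Submodule.sum_mem
      intro k hk
      simp only [Finset.mem_Icc] at hk
      rw [qtOne_nonneg n (by omega), qtOne_nonneg n (by omega)]
      rw [show ((-1 : MvPolynomial (Fin n) ℤ) ^ k) = (((-1:ℤ)^k : ℤ) : MvPolynomial (Fin n) ℤ) by push_cast; ring]
      rw [mul_assoc]
      apply intCast_mul_mem_span
      apply Submodule.subset_span
      refine ⟨{(i + (k:ℤ)).toNat, (j - (k:ℤ)).toNat}, by simp; omega, ?_, (eP_pair _ _ _).symm⟩
      rw [wgt_pair]
      have h1 : (i + (k:ℤ)).toNat = i.toNat + k := by omega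
      have h2 : (j - (k:ℤ)).toNat = j.toNat - k := by omega
      have h3 : k ≤ j.toNat - 1 := hk.2
      have h4 : 1 ≤ k := hk.1
      rw [h1, h2]
      obtain ⟨c, hc⟩ : ∃ c, j.toNat = c + k := ⟨j.toNat - k, by omega⟩
      have hc2 : c < i.toNat := by omega
      rw [hc]
      have : c + k - k = c := by omega
      rw [this]
      nlinarith
    · rw [qtOne_nonneg n (by omega)]
      rw [show ((-1 : MvPolynomial (Fin n) ℤ) ^ j.toNat) = (((-1:ℤ)^j.toNat : ℤ) : MvPolynomial (Fin n) ℤ) by push_cast; ring]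
      apply intCast_mul_mem_span
      apply Submodule.subset_span
      refine ⟨{(i + j).toNat}, by simp; omega, ?_, by simp [eP]⟩
      have : (i+j).toNat = i.toNat + j.toNat := by omega
      simp only [wgt, Multiset.map_singleton, Multiset.sum_singleton, this]
      have h1 : 1 ≤ j.toNat := by omega
      have h2 : 1 ≤ i.toNat := by omega
      nlinarith

/-! the key triangularity lemma -/

def msetZ (l : List ℤ) : Multiset ℕ := (l : Multiset ℤ).map Int.toNat

lemma msetZ_nil : msetZ [] = 0 := rfl

lemma qtAux_nil (n f : ℕ) : QtAux n f [] = 1 := by cases f <;> rfl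
lemma qtAux_one (n f : ℕ) (a : ℤ) : QtAux n f [a] = QtOne n a := by cases f <;> rfl
lemma qtAux_two (n f : ℕ) (a b : ℤ) : QtAux n f [a, b] = QtTwo n a b := by cases f <;> rfl

lemma qtAux_base (n f : ℕ) (l : List ℤ) (hs : l.Pairwise (· ≥ ·)) (h0 : ∀ x ∈ l, 0 ≤ x)
    (hlen : l.length ≤ 2) :
    QtAux n f l - eP n (msetZ l) ∈ Submodule.span ℤ (hiSet n (msetZ l).sum (wgt (msetZ l))) := by
  match l, hlen with
  | [], _ =>
    rw [qtAux_nil]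
    simp [msetZ, eP]
  | [a], _ =>
    rw [qtAux_one, qtOne_nonneg n (h0 a (by simp))]
    have : msetZ [a] = {a.toNat} := rfl
    rw [this]
    simp [eP]
  | [a, b], _ =>
    rw [qtAux_two]
    have hba : b ≤ a := List.rel_of_pairwise_cons hs (a' := b) (by simp)
    have hb : 0 ≤ b := h0 b (by simp)
    have : msetZ [a, b] = {a.toNat, b.toNat} := rfl
    rw [this]
    have h := qtTwo_key n hb hba
    have h1 : ({a.toNat, b.toNat} : Multiset ℕ).sum = a.toNat + b.toNat := by simp
    have h2 : wgt {a.toNat, b.toNat} = a.toNat * a.toNat + b.toNat * b.toNat := wgt_pair _ _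
    rw [h1, h2]
    exact h

lemma qtAux_succ (n f : ℕ) (l : List ℤ) (h3 : 3 ≤ l.length) :
    QtAux n (f+1) l =
      ∑ j ∈ Finset.range ((if l.length % 2 = 0 then l else l ++ [0]).length - 1),
        (-1 : MvPolynomial (Fin n) ℤ) ^ j
          * QtTwo n ((if l.length % 2 = 0 then l else l ++ [0]).getD j 0)
              ((if l.length % 2 = 0 then l else l ++ [0]).getD
                ((if l.length % 2 = 0 then l else l ++ [0]).length - 1) 0)
          * QtAux n f (((if l.length % 2 = 0 then l else l ++ [0]).eraseIdx
                ((if l.length % 2 = 0 then l else l ++ [0]).length - 1)).eraseIdx j) := by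
  rcases l with _|⟨a,_|⟨b,_|⟨c,t⟩⟩⟩
  · simp at h3
  · simp at h3
  · simp at h3
  · rfl

lemma perm_getElem_cons_eraseIdx {α : Type*} [DecidableEq α] (l : List α) (i : ℕ) (h : i < l.length) :
    (l : Multiset α) = l[i] ::ₘ ((l.eraseIdx i : List α) : Multiset α) := by
  have h1 : l.Perm (l[i] :: l.eraseIdx i) :=
    (List.perm_cons_erase (l.getElem_mem h)).trans ((List.erase_getElem h).cons _)
  exact Multiset.coe_eq_coe.mpr h1 |>.trans rfl

lemma qtAux_key (n : ℕ) : ∀ (f : ℕ) (l : List ℤ), l.Pairwise (· ≥ ·) → (∀ x ∈ l, 0 ≤ x) →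
    l.length ≤ f + 2 →
    QtAux n f l - eP n (msetZ l) ∈ Submodule.span ℤ (hiSet n (msetZ l).sum (wgt (msetZ l))) := by
  intro f
  induction f with
  | zero => exact fun l hs h0 hlen => qtAux_base n 0 l hs h0 hlen
  | succ f ih =>
    intro l hs h0 hlen
    by_cases hsmall : l.length ≤ 2
    · exact qtAux_base n (f+1) l hs h0 hsmall
    · push_neg at hsmall
      rw [qtAux_succ n f l (by omega)]
      set μ : List ℤ := if l.length % 2 = 0 then l else l ++ [0] with hμdef
      have hμs : μ.Pairwise (· ≥ ·) := by
        rw [hμdef]; split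
        · exact hs
        · rw [List.pairwise_append]
          exact ⟨hs, by simp, by simpa using h0⟩
      have hμ0 : ∀ x ∈ μ, 0 ≤ x := by
        rw [hμdef]; split
        · exact h0
        · intro x hx
          rcases List.mem_append.mp hx with h | h
          · exact h0 x h
          · simp at h; omega
      have hμlen : μ.length = l.length ∨ μ.length = l.length + 1 := by
        rw [hμdef]; split
        · left; rfl
        · right; simp
      have hμlen4 : 4 ≤ μ.length := by
        rw [hμdef]; split
        · omega
        · simp; omega
      have hμeven : μ.length % 2 = 0 := by
        rw [hμdef]; split
        · omega
        · simp; omega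
      have hmm : msetZ μ = msetZ l ∨ msetZ μ = 0 ::ₘ msetZ l := by
        rw [hμdef]; split
        · exact Or.inl rfl
        · right
          show msetZ (l ++ [0]) = _
          simp [msetZ]
      have heP : eP n (msetZ μ) = eP n (msetZ l) := by
        rcases hmm with h | h
        · rw [h]
        · rw [h, eP_cons]; simp
      have hsum : (msetZ μ).sum = (msetZ l).sum := by
        rcases hmm with h | h <;> simp [h]
      have hwgt : wgt (msetZ μ) = wgt (msetZ l) := by
        rcases hmm with h | h <;> simp [h, wgt_cons]
      rw [← heP, ← hsum, ← hwgt]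
      have hm1 : μ.length - 1 < μ.length := by omega
      have inner : ∀ j, j ∈ Finset.range (μ.length - 1) →
          QtTwo n (μ.getD j 0) (μ.getD (μ.length - 1) 0)
              * QtAux n f ((μ.eraseIdx (μ.length - 1)).eraseIdx j)
            - eP n (msetZ μ) ∈ Submodule.span ℤ (hiSet n (msetZ μ).sum (wgt (msetZ μ))) := by
        intro j hj
        rw [Finset.mem_range] at hj
        have hjlt : j < μ.length := by omega
        have hgd1 : μ.getD j 0 = μ[j]'hjlt := List.getD_eq_getElem μ 0 hjlt
        have hgd2 : μ.getD (μ.length - 1) 0 = μ[μ.length - 1]'hm1 := List.getD_eq_getElem μ 0 hm1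
        set a := μ[j]'hjlt with ha
        set b := μ[μ.length - 1]'hm1 with hb
        have hab : b ≤ a := by
          have := hμs.rel_get_of_lt (a := ⟨j, hjlt⟩) (b := ⟨μ.length - 1, hm1⟩)
            (by rw [Fin.lt_def]; exact hj)
          simpa using this
        have hb0 : 0 ≤ b := hμ0 _ (List.getElem_mem hm1)
        set rest := (μ.eraseIdx (μ.length - 1)).eraseIdx j with hrest
        have hsub : rest.Sublist μ :=
          ((μ.eraseIdx (μ.length - 1)).eraseIdx_sublist j).trans (μ.eraseIdx_sublist (μ.length - 1))
        have hrs : rest.Pairwise (· ≥ ·) := hμs.sublist hsub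
        have hr0 : ∀ x ∈ rest, 0 ≤ x := fun x hx => hμ0 x (hsub.subset hx)
        have hlen1 : (μ.eraseIdx (μ.length - 1)).length = μ.length - 1 := by
          rw [List.length_eraseIdx]; simp [hm1]
        have hjlt' : j < (μ.eraseIdx (μ.length - 1)).length := by omega
        have hrlen : rest.length = μ.length - 2 := by
          rw [hrest, List.length_eraseIdx, if_pos hjlt', hlen1]
          omega
        have hsplit : (μ : Multiset ℤ) = b ::ₘ a ::ₘ (rest : Multiset ℤ) := by
          have e1 := perm_getElem_cons_eraseIdx μ _ hm1
          have e2 := perm_getElem_cons_eraseIdx (μ.eraseIdx (μ.length - 1)) j hjlt'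
          have e3 : (μ.eraseIdx (μ.length - 1))[j]'hjlt' = a := by
            rw [List.getElem_eraseIdx, dif_pos hj]
          rw [e1, e2, e3]
        have hmsplit : msetZ μ = b.toNat ::ₘ a.toNat ::ₘ msetZ rest := by
          rw [msetZ, hsplit]; simp [msetZ]
        have hihrest := ih rest hrs hr0 (by omega)
        have hqa_ge : QtAux n f rest
            ∈ Submodule.span ℤ (geSet n (msetZ rest).sum (wgt (msetZ rest))) := by
          have hq : QtAux n f rest
              = (QtAux n f rest - eP n (msetZ rest)) + eP n (msetZ rest) := by ring
          rw [hq]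
          exact Submodule.add_mem _
            (Submodule.span_mono (hiSet_subset_geSet n _ _) hihrest)
            (Submodule.subset_span ⟨msetZ rest, rfl, le_refl _, rfl⟩)
        have hpair := qtTwo_key n hb0 hab
        have hdecomp : QtTwo n a b * QtAux n f rest - eP n (msetZ μ)
            = (QtTwo n a b - eP n {a.toNat, b.toNat}) * QtAux n f rest
              + eP n {a.toNat, b.toNat} * (QtAux n f rest - eP n (msetZ rest)) := by
          rw [hmsplit, eP_cons, eP_cons, eP_pair]; ring
        rw [hgd1, hgd2, hdecomp]
        have hD : (msetZ μ).sum = (a.toNat + b.toNat) + (msetZ rest).sum := by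
          simp [hmsplit]; ring
        have hW : wgt (msetZ μ) = (a.toNat * a.toNat + b.toNat * b.toNat) + wgt (msetZ rest) := by
          simp [hmsplit, wgt_cons]; ring
        rw [hD, hW]
        apply Submodule.add_mem
        · exact mul_mem_span_hi hpair hqa_ge
        · exact mul_mem_span_ge_hi
            (Submodule.subset_span ⟨{a.toNat, b.toNat}, by simp, by rw [wgt_pair], rfl⟩) hihrest
      have hsign : (∑ j ∈ Finset.range (μ.length - 1), (-1 : MvPolynomial (Fin n) ℤ)^j) = 1 := by
        rw [neg_one_geom_sum, if_neg]
        rw [Nat.even_iff]; omega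
      have hsum2 : (∑ j ∈ Finset.range (μ.length - 1),
            (-1 : MvPolynomial (Fin n) ℤ)^j * QtTwo n (μ.getD j 0) (μ.getD (μ.length - 1) 0)
              * QtAux n f ((μ.eraseIdx (μ.length - 1)).eraseIdx j)) - eP n (msetZ μ)
          = ∑ j ∈ Finset.range (μ.length - 1),
            ((-1 : MvPolynomial (Fin n) ℤ)^j * QtTwo n (μ.getD j 0) (μ.getD (μ.length - 1) 0)
              * QtAux n f ((μ.eraseIdx (μ.length - 1)).eraseIdx j)
             - (-1 : MvPolynomial (Fin n) ℤ)^j * eP n (msetZ μ)) := by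
        rw [Finset.sum_sub_distrib]
        congr 1
        rw [← Finset.sum_mul, hsign, one_mul]
      rw [hsum2]
      apply Submodule.sum_mem
      intro j hj
      have h := inner j hj
      rw [mul_assoc, ← mul_sub]
      rw [show ((-1 : MvPolynomial (Fin n) ℤ)^j) = (((-1:ℤ)^j : ℤ) : MvPolynomial (Fin n) ℤ) by
        push_cast; ring]
      exact intCast_mul_mem_span _ h

noncomputable def B0v (n : ℕ) (d : Fin n →₀ ℕ) : MvPolynomial (Fin n) ℤ :=
  ∏ i : Fin n, esymm (Fin n) ℤ ((i : ℕ) + 1) ^ d i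

noncomputable def symBasis (n : ℕ) :
    Module.Basis (Fin n →₀ ℕ) ℤ (symmetricSubalgebra (Fin n) ℤ) :=
  (basisMonomials (Fin n) ℤ).map (esymmAlgEquiv (Fin n) ℤ (Fintype.card_fin n)).toLinearEquiv

lemma symBasis_val (n : ℕ) (d : Fin n →₀ ℕ) :
    ((symBasis n d : symmetricSubalgebra (Fin n) ℤ) : MvPolynomial (Fin n) ℤ) = B0v n d := by
  have h1 : symBasis n d = esymmAlgEquiv (Fin n) ℤ (Fintype.card_fin n) (monomial d 1) := by
    simp [symBasis, Module.Basis.map_apply, coe_basisMonomials]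
  rw [h1]
  rw [esymmAlgEquiv_apply]
  rw [esymmAlgHom_apply]
  rw [aeval_monomial]
  rw [map_one, one_mul]
  rw [Finsupp.prod_fintype _ _ (fun i => pow_zero _)]
  rfl

def dsum (n : ℕ) (d : Fin n →₀ ℕ) : ℕ := ∑ i : Fin n, ((i : ℕ) + 1) * d i
def Wd (n : ℕ) (d : Fin n →₀ ℕ) : ℕ := ∑ i : Fin n, (((i : ℕ) + 1) * ((i : ℕ) + 1)) * d i

noncomputable def cnt (n : ℕ) (μ : Multiset ℕ) : Fin n →₀ ℕ :=
  Finsupp.equivFunOnFinite.symm (fun i => μ.count ((i : ℕ) + 1))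

@[simp] lemma cnt_apply (n : ℕ) (μ : Multiset ℕ) (i : Fin n) :
    cnt n μ i = μ.count ((i : ℕ) + 1) := rfl

lemma sum_ite_hit {n : ℕ} (a : ℕ) (h1 : 0 < a) (h2 : a ≤ n) (g : Fin n → ℕ) :
    (∑ i : Fin n, (if (i : ℕ) + 1 = a then g i else 0)) = g ⟨a - 1, by omega⟩ := by
  rw [Finset.sum_eq_single (⟨a - 1, by omega⟩ : Fin n)]
  · rw [if_pos]; simp; omega
  · intro b _ hb
    rw [if_neg]
    intro hc
    exact hb (Fin.ext (by simp; omega))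
  · simp

lemma prod_ite_hit {M : Type*} [CommMonoid M] {n : ℕ} (a : ℕ) (h1 : 0 < a) (h2 : a ≤ n)
    (g : Fin n → M) :
    (∏ i : Fin n, (if (i : ℕ) + 1 = a then g i else 1)) = g ⟨a - 1, by omega⟩ := by
  rw [Finset.prod_eq_single (⟨a - 1, by omega⟩ : Fin n)]
  · rw [if_pos]; simp; omega
  · intro b _ hb
    rw [if_neg]
    intro hc
    exact hb (Fin.ext (by simp; omega))
  · simp

lemma cnt_cons (n a : ℕ) (μ : Multiset ℕ) (i : Fin n) :
    cnt n (a ::ₘ μ) i = cnt n μ i + (if (i : ℕ) + 1 = a then 1 else 0) := by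
  simp [Multiset.count_cons]

lemma dsum_cnt (n : ℕ) (μ : Multiset ℕ) (h : ∀ x ∈ μ, 0 < x ∧ x ≤ n) :
    dsum n (cnt n μ) = μ.sum := by
  induction μ using Multiset.induction with
  | empty => simp [dsum]
  | cons a μ ihm =>
    have ha := h a (Multiset.mem_cons_self a μ)
    have hr := fun x hx => h x (Multiset.mem_cons_of_mem hx)
    have step : ∀ i : Fin n, ((i : ℕ) + 1) * cnt n (a ::ₘ μ) i
        = ((i : ℕ) + 1) * cnt n μ i + (if (i : ℕ) + 1 = a then (i : ℕ) + 1 else 0) := by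
      intro i
      rw [cnt_cons, Nat.mul_add]
      congr 1
      split <;> simp
    rw [dsum]
    calc (∑ i : Fin n, ((i : ℕ) + 1) * cnt n (a ::ₘ μ) i)
        = (∑ i : Fin n, ((i : ℕ) + 1) * cnt n μ i)
          + ∑ i : Fin n, (if (i : ℕ) + 1 = a then (i : ℕ) + 1 else 0) := by
          rw [← Finset.sum_add_distrib]
          exact Finset.sum_congr rfl fun i _ => step i
      _ = μ.sum + a := by
          rw [sum_ite_hit a ha.1 ha.2, ← dsum, ihm hr]
          simp
          omega
      _ = (a ::ₘ μ).sum := by rw [Multiset.sum_cons]; omega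

lemma Wd_cnt (n : ℕ) (μ : Multiset ℕ) (h : ∀ x ∈ μ, 0 < x ∧ x ≤ n) :
    Wd n (cnt n μ) = wgt μ := by
  induction μ using Multiset.induction with
  | empty => simp [Wd, wgt]
  | cons a μ ihm =>
    have ha := h a (Multiset.mem_cons_self a μ)
    have hr := fun x hx => h x (Multiset.mem_cons_of_mem hx)
    have step : ∀ i : Fin n, (((i : ℕ) + 1) * ((i : ℕ) + 1)) * cnt n (a ::ₘ μ) i
        = (((i : ℕ) + 1) * ((i : ℕ) + 1)) * cnt n μ i
          + (if (i : ℕ) + 1 = a then ((i : ℕ) + 1) * ((i : ℕ) + 1) else 0) := by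
      intro i
      rw [cnt_cons, Nat.mul_add]
      congr 1
      split <;> simp
    rw [Wd]
    calc (∑ i : Fin n, (((i : ℕ) + 1) * ((i : ℕ) + 1)) * cnt n (a ::ₘ μ) i)
        = (∑ i : Fin n, (((i : ℕ) + 1) * ((i : ℕ) + 1)) * cnt n μ i)
          + ∑ i : Fin n, (if (i : ℕ) + 1 = a then ((i : ℕ) + 1) * ((i : ℕ) + 1) else 0) := by
          rw [← Finset.sum_add_distrib]
          exact Finset.sum_congr rfl fun i _ => step i
      _ = wgt μ + a * a := by
          rw [sum_ite_hit a ha.1 ha.2, ← Wd, ihm hr]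
          have : a - 1 + 1 = a := by omega
          simp [this]
      _ = wgt (a ::ₘ μ) := by simp [wgt]; omega

lemma eP_cnt (n : ℕ) (μ : Multiset ℕ) (h : ∀ x ∈ μ, 0 < x ∧ x ≤ n) :
    eP n μ = B0v n (cnt n μ) := by
  induction μ using Multiset.induction with
  | empty => simp [eP, B0v]
  | cons a μ ihm =>
    have ha := h a (Multiset.mem_cons_self a μ)
    have hr := fun x hx => h x (Multiset.mem_cons_of_mem hx)
    have step : ∀ i : Fin n, esymm (Fin n) ℤ ((i : ℕ) + 1) ^ (cnt n (a ::ₘ μ) i)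
        = esymm (Fin n) ℤ ((i : ℕ) + 1) ^ (cnt n μ i)
          * (if (i : ℕ) + 1 = a then esymm (Fin n) ℤ ((i : ℕ) + 1) else 1) := by
      intro i
      rw [cnt_cons, pow_add]
      congr 1
      split <;> simp
    rw [B0v]
    symm
    calc (∏ i : Fin n, esymm (Fin n) ℤ ((i : ℕ) + 1) ^ (cnt n (a ::ₘ μ) i))
        = (∏ i : Fin n, esymm (Fin n) ℤ ((i : ℕ) + 1) ^ (cnt n μ i))
          * ∏ i : Fin n, (if (i : ℕ) + 1 = a then esymm (Fin n) ℤ ((i : ℕ) + 1) else 1) := by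
          rw [← Finset.prod_mul_distrib]
          exact Finset.prod_congr rfl fun i _ => step i
      _ = B0v n (cnt n μ) * esymm (Fin n) ℤ a := by
          rw [prod_ite_hit a ha.1 ha.2, ← B0v]
          congr 2
          simp
          omega
      _ = eP n (a ::ₘ μ) := by
          rw [← ihm hr]
          simp [eP]
          ring

lemma esymm_big (n k : ℕ) (h : n < k) : esymm (Fin n) ℤ k = 0 := by
  rw [esymm]
  rw [Finset.powersetCard_eq_empty.mpr (by simpa using h)]
  simp

lemma eP_zero_of_big (n : ℕ) (μ : Multiset ℕ) (hx : ∃ x ∈ μ, n < x) : eP n μ = 0 := by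
  obtain ⟨x, hx1, hx2⟩ := hx
  apply Multiset.prod_eq_zero
  rw [← esymm_big n x hx2]
  exact Multiset.mem_map_of_mem _ hx1

lemma filter_pos_facts (n : ℕ) (μ : Multiset ℕ) :
    eP n (μ.filter (fun x => 0 < x)) = eP n μ
    ∧ (μ.filter (fun x => 0 < x)).sum = μ.sum
    ∧ wgt (μ.filter (fun x => 0 < x)) = wgt μ := by
  have hsplit : μ.filter (fun x => 0 < x) + μ.filter (fun x => ¬ 0 < x) = μ :=
    Multiset.filter_add_not _ μ
  have hzero : ∀ x ∈ μ.filter (fun x => ¬ 0 < x), x = 0 := by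
    intro x hx
    have := (Multiset.mem_filter.mp hx).2
    omega
  refine ⟨?_, ?_, ?_⟩
  · conv_rhs => rw [← hsplit]
    rw [show ∀ a b : Multiset ℕ, eP n (a + b) = eP n a * eP n b from
      fun a b => by simp [eP, Multiset.prod_add]]
    rw [show eP n (μ.filter (fun x => ¬ 0 < x)) = 1 from ?_]
    · ring
    · apply Multiset.prod_eq_one
      intro y hy
      rw [Multiset.mem_map] at hy
      obtain ⟨x, hx, rfl⟩ := hy
      rw [hzero x hx]
      exact esymm_zero _ _
  · conv_rhs => rw [← hsplit]
    rw [Multiset.sum_add, Multiset.sum_eq_zero hzero, add_zero]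
  · conv_rhs => rw [← hsplit]
    rw [show ∀ a b : Multiset ℕ, wgt (a + b) = wgt a + wgt b from fun a b => by simp [wgt]]
    have hz : wgt (μ.filter (fun x => ¬ 0 < x)) = 0 := by
      simp only [wgt]
      apply Multiset.sum_eq_zero
      intro y hy
      rw [Multiset.mem_map] at hy
      obtain ⟨x, hx, rfl⟩ := hy
      simp [hzero x hx]
    rw [hz, add_zero]


lemma wgt_le_sq (μ : Multiset ℕ) : wgt μ ≤ μ.sum * μ.sum := by
  induction μ using Multiset.induction with
  | empty => simp [wgt]
  | cons a μ ih =>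
    have h1 : wgt (a ::ₘ μ) = a * a + wgt μ := by simp [wgt]
    rw [h1, Multiset.sum_cons]
    calc a * a + wgt μ ≤ a * a + μ.sum * μ.sum := Nat.add_le_add_left ih _
      _ ≤ (a + μ.sum) * (a + μ.sum) := by
          have : (a + μ.sum) * (a + μ.sum) = a * a + (2 * a * μ.sum + μ.sum * μ.sum) := by ring
          omega

lemma eP_symm (n : ℕ) (μ : Multiset ℕ) : eP n μ ∈ symmetricSubalgebra (Fin n) ℤ := by
  apply Subalgebra.multiset_prod_mem
  intro p hp
  rw [Multiset.mem_map] at hp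
  obtain ⟨x, _, rfl⟩ := hp
  exact (mem_symmetricSubalgebra _).mpr (esymm_isSymmetric _ _ _)

noncomputable def msetOf (n : ℕ) (d : Fin n →₀ ℕ) : Multiset ℕ :=
  ∑ i : Fin n, Multiset.replicate (d i) ((i : ℕ) + 1)

lemma msetOf_mem (n : ℕ) (d : Fin n →₀ ℕ) : ∀ x ∈ msetOf n d, 0 < x ∧ x ≤ n := by
  intro x hx
  rw [msetOf, Multiset.mem_sum] at hx
  obtain ⟨i, _, hx⟩ := hx
  rw [Multiset.eq_of_mem_replicate hx]
  omega

lemma cnt_msetOf (n : ℕ) (d : Fin n →₀ ℕ) : cnt n (msetOf n d) = d := by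
  apply Finsupp.ext
  intro i
  rw [cnt_apply, msetOf, Multiset.count_sum']
  rw [Finset.sum_eq_single i]
  · simp [Multiset.count_replicate]
  · intro b _ hb
    rw [Multiset.count_replicate, if_neg]
    intro hc
    exact hb (Fin.ext (by omega))
  · simp

lemma span_hi_le_image (n d W : ℕ) :
    Submodule.span ℤ (hiSet n d W)
      ≤ Submodule.span ℤ (B0v n '' {e : Fin n →₀ ℕ | dsum n e = d ∧ W < Wd n e}) := by
  rw [Submodule.span_le]
  rintro p ⟨μ, hsum, hw, rfl⟩
  by_cases hbig : ∃ x ∈ μ, n < x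
  · rw [eP_zero_of_big n μ hbig]; exact Submodule.zero_mem _
  · push_neg at hbig
    obtain ⟨hP, hS, hW⟩ := filter_pos_facts n μ
    have hb : ∀ x ∈ μ.filter (fun x => 0 < x), 0 < x ∧ x ≤ n := by
      intro x hx
      exact ⟨(Multiset.mem_filter.mp hx).2, hbig x (Multiset.mem_filter.mp hx).1⟩
    apply Submodule.subset_span
    refine ⟨cnt n (μ.filter (fun x => 0 < x)), ⟨?_, ?_⟩, ?_⟩
    · rw [dsum_cnt n _ hb, hS, hsum]
    · rw [Wd_cnt n _ hb, hW]; exact hw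
    · rw [← eP_cnt n _ hb, hP]

lemma span_hi_symm (n d W : ℕ) :
    Submodule.span ℤ (hiSet n d W)
      ≤ Subalgebra.toSubmodule (symmetricSubalgebra (Fin n) ℤ) := by
  rw [Submodule.span_le]
  rintro p ⟨μ, _, _, rfl⟩
  exact eP_symm n μ


/-- Partitions `λ` with all parts positive and at most `n`, i.e. `λ_1 ≤ n`. -/
def PartBdd (n : ℕ) : Type :=
  {l : List ℕ // l.Pairwise (· ≥ ·) ∧ ∀ x ∈ l, 0 < x ∧ x ≤ n}

noncomputable def pmset (n : ℕ) (lam : PartBdd n) : Multiset ℕ := (lam.val : Multiset ℕ)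

noncomputable def iotaP (n : ℕ) (lam : PartBdd n) : Fin n →₀ ℕ := cnt n (pmset n lam)

lemma pmset_bounds (n : ℕ) (lam : PartBdd n) : ∀ x ∈ pmset n lam, 0 < x ∧ x ≤ n := by
  intro x hx
  exact lam.prop.2 x (by simpa [pmset] using hx)

lemma coe_list_eq (l : List ℕ) :
    (l.map fun a => (a : ℤ)) = List.map (fun a : ℕ => (a : ℤ)) l := by
  induction l with
  | nil => rfl
  | cons a t ih => simpa using ih

lemma msetZ_map_cast (l : List ℕ) :
    msetZ (List.map (fun a : ℕ => (a : ℤ)) l) = (l : Multiset ℕ) := by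
  induction l with
  | nil => rfl
  | cons a t ih =>
    show msetZ (((a : ℤ)) :: List.map (fun a : ℕ => (a : ℤ)) t) = ((a :: t : List ℕ) : Multiset ℕ)
    rw [msetZ, ← Multiset.cons_coe, Multiset.map_cons, ← Multiset.cons_coe]
    rw [Int.toNat_natCast]
    congr 1

noncomputable def vQ (n : ℕ) (lam : PartBdd n) : MvPolynomial (Fin n) ℤ :=
  Qt n (lam.val.map fun a => (a : ℤ))

lemma vQ_eq (n : ℕ) (lam : PartBdd n) :
    vQ n lam = Qt n (List.map (fun a : ℕ => (a : ℤ)) lam.val) := by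
  rw [vQ]
  exact congrArg (Qt n) (coe_list_eq lam.val)

lemma key_for_lam (n : ℕ) (lam : PartBdd n) :
    vQ n lam - eP n (pmset n lam)
      ∈ Submodule.span ℤ (hiSet n (pmset n lam).sum (wgt (pmset n lam))) := by
  have hs : (List.map (fun a : ℕ => (a : ℤ)) lam.val).Pairwise (· ≥ ·) := by
    refine List.pairwise_map.mpr (List.Pairwise.imp ?_ lam.prop.1)
    intro a b hab
    exact_mod_cast hab
  have h0 : ∀ x ∈ List.map (fun a : ℕ => (a : ℤ)) lam.val, 0 ≤ x := by
    intro x hx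
    obtain ⟨a, -, rfl⟩ := List.mem_map.mp hx
    exact_mod_cast Nat.zero_le a
  have h := qtAux_key n (List.map (fun a : ℕ => (a : ℤ)) lam.val).length
    (List.map (fun a : ℕ => (a : ℤ)) lam.val) hs h0 (by omega)
  rw [msetZ_map_cast] at h
  rw [vQ_eq]
  exact h

lemma vQ_symm (n : ℕ) (lam : PartBdd n) : vQ n lam ∈ symmetricSubalgebra (Fin n) ℤ := by
  have h := key_for_lam n lam
  have h2 : vQ n lam = (vQ n lam - eP n (pmset n lam)) + eP n (pmset n lam) := by ring
  rw [h2]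
  exact add_mem ((Subalgebra.mem_toSubmodule _).mp (span_hi_symm n _ _ h)) (eP_symm n _)

noncomputable def sQ (n : ℕ) (lam : PartBdd n) : symmetricSubalgebra (Fin n) ℤ :=
  ⟨vQ n lam, vQ_symm n lam⟩

def Tset (n : ℕ) (lam : PartBdd n) : Set (Fin n →₀ ℕ) :=
  {e | dsum n e = (pmset n lam).sum ∧ wgt (pmset n lam) < Wd n e}

lemma lift_key (n : ℕ) (lam : PartBdd n) :
    sQ n lam - symBasis n (iotaP n lam)
      ∈ Submodule.span ℤ (⇑(symBasis n) '' Tset n lam) := by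
  have hval : ((sQ n lam - symBasis n (iotaP n lam) : symmetricSubalgebra (Fin n) ℤ)
        : MvPolynomial (Fin n) ℤ)
      = vQ n lam - eP n (pmset n lam) := by
    rw [AddSubgroupClass.coe_sub, symBasis_val]
    congr 1
    exact (eP_cnt n _ (pmset_bounds n lam)).symm
  have hmem := span_hi_le_image n _ _ (key_for_lam n lam)
  rw [← hval] at hmem
  set f := (symmetricSubalgebra (Fin n) ℤ).val.toLinearMap with hf
  have himg : B0v n '' {e : Fin n →₀ ℕ | dsum n e = (pmset n lam).sum ∧ wgt (pmset n lam) < Wd n e} = f '' (⇑(symBasis n) '' Tset n lam) := by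
    rw [Set.image_image]
    symm
    apply Set.image_congr
    intro e _
    exact symBasis_val n e
  rw [himg, ← Submodule.map_span] at hmem
  obtain ⟨y, hy, hyeq⟩ := Submodule.mem_map.mp hmem
  have hyx : y = sQ n lam - symBasis n (iotaP n lam) := Subtype.ext hyeq
  rwa [hyx] at hy

lemma repr_span_support {n : ℕ} {T : Set (Fin n →₀ ℕ)} {x : symmetricSubalgebra (Fin n) ℤ}
    (hx : x ∈ Submodule.span ℤ (⇑(symBasis n) '' T)) :
    ∀ e, e ∉ T → (symBasis n).repr x e = 0 := by
  induction hx using Submodule.span_induction with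
  | mem x hxm =>
    obtain ⟨e', he', rfl⟩ := hxm
    intro e he
    rw [Module.Basis.repr_self, Finsupp.single_apply, if_neg]
    intro hc
    exact he (hc ▸ he')
  | zero => intro e _; simp
  | add x y _ _ hx hy => intro e he; rw [map_add, Finsupp.add_apply, hx e he, hy e he]; simp
  | smul c x _ hx => intro e he; rw [map_smul, Finsupp.smul_apply, hx e he, smul_zero]

lemma iota_inj (n : ℕ) : Function.Injective (iotaP n) := by
  haveI : IsAntisymm ℕ (· ≥ ·) := ⟨fun a b h1 h2 => le_antisymm h2 h1⟩
  intro l1 l2 he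
  have hm : pmset n l1 = pmset n l2 := by
    ext m
    by_cases hb : 0 < m ∧ m ≤ n
    · have := DFunLike.congr_fun he (⟨m - 1, by omega⟩ : Fin n)
      simp only [iotaP, cnt_apply] at this
      have hmm : (m - 1) + 1 = m := by omega
      rwa [hmm] at this
    · have h1 : m ∉ pmset n l1 := fun hc => hb (pmset_bounds n l1 m hc)
      have h2 : m ∉ pmset n l2 := fun hc => hb (pmset_bounds n l2 m hc)
      rw [Multiset.count_eq_zero_of_notMem h1, Multiset.count_eq_zero_of_notMem h2]
  have hperm : l1.val.Perm l2.val := Multiset.coe_eq_coe.mp hm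
  have hval : l1.val = l2.val :=
    List.Perm.eq_of_pairwise' l1.prop.1 l2.prop.1 hperm
  exact Subtype.ext hval

lemma dsum_iota (n : ℕ) (lam : PartBdd n) : dsum n (iotaP n lam) = (pmset n lam).sum :=
  dsum_cnt n _ (pmset_bounds n lam)

lemma Wd_iota (n : ℕ) (lam : PartBdd n) : Wd n (iotaP n lam) = wgt (pmset n lam) :=
  Wd_cnt n _ (pmset_bounds n lam)

lemma repr_sQ_ne (n : ℕ) (lam : PartBdd n) (e : Fin n →₀ ℕ) (he : e ∉ Tset n lam)
    (hne : e ≠ iotaP n lam) :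
    (symBasis n).repr (sQ n lam) e = 0 := by
  have h1 : sQ n lam = (sQ n lam - symBasis n (iotaP n lam)) + symBasis n (iotaP n lam) := by
    abel
  rw [h1, map_add, Finsupp.add_apply, repr_span_support (lift_key n lam) e he,
    Module.Basis.repr_self, Finsupp.single_apply, if_neg (fun h => hne h.symm), add_zero]

lemma iota_not_Tset (n : ℕ) (lam : PartBdd n) : iotaP n lam ∉ Tset n lam := by
  rintro ⟨-, hw⟩
  rw [Wd_iota] at hw
  omega

lemma repr_sQ_self (n : ℕ) (lam : PartBdd n) :
    (symBasis n).repr (sQ n lam) (iotaP n lam) = 1 := by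
  have h1 : sQ n lam = (sQ n lam - symBasis n (iotaP n lam)) + symBasis n (iotaP n lam) := by
    abel
  rw [h1, map_add, Finsupp.add_apply,
    repr_span_support (lift_key n lam) _ (iota_not_Tset n lam),
    Module.Basis.repr_self, Finsupp.single_apply, if_pos rfl, zero_add]

lemma sQ_indep (n : ℕ) : LinearIndependent ℤ (sQ n) := by
  classical
  rw [linearIndependent_iff']
  intro s g hsum i hi
  by_contra hgi
  set t := s.filter (fun j => g j ≠ 0) with ht
  have hit : i ∈ t := Finset.mem_filter.mpr ⟨hi, hgi⟩
  have hne : (t.filter (fun j => (pmset n j).sum = (pmset n i).sum)).Nonempty :=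
    ⟨i, Finset.mem_filter.mpr ⟨hit, rfl⟩⟩
  obtain ⟨l0, hl0, hmin⟩ := Finset.exists_min_image _ (fun j => wgt (pmset n j)) hne
  have hl0t : l0 ∈ t := (Finset.mem_filter.mp hl0).1
  have hl0s : l0 ∈ s := (Finset.mem_filter.mp hl0t).1
  have hl0g : g l0 ≠ 0 := (Finset.mem_filter.mp hl0t).2
  have hl0d : (pmset n l0).sum = (pmset n i).sum := (Finset.mem_filter.mp hl0).2
  have h0 : ((symBasis n).repr (∑ j ∈ s, g j • sQ n j)) (iotaP n l0) = 0 := by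
    rw [hsum]; simp
  rw [map_sum, Finsupp.finset_sum_apply] at h0
  have hterm : ∀ j ∈ s, j ≠ l0 → ((symBasis n).repr (g j • sQ n j)) (iotaP n l0) = 0 := by
    intro j hjs hjne
    rw [map_smul, Finsupp.smul_apply]
    by_cases hgj : g j = 0
    · rw [hgj]; simp
    · have hjt : j ∈ t := Finset.mem_filter.mpr ⟨hjs, hgj⟩
      have hrepr0 : (symBasis n).repr (sQ n j) (iotaP n l0) = 0 := by
        apply repr_sQ_ne
        · rintro ⟨hd, hw⟩
          rw [dsum_iota, Wd_iota] at *
          have hdj : (pmset n l0).sum = (pmset n j).sum := hd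
          have hjmem : j ∈ t.filter (fun j => (pmset n j).sum = (pmset n i).sum) :=
            Finset.mem_filter.mpr ⟨hjt, by omega⟩
          have := hmin j hjmem
          omega
        · intro hc
          exact hjne (iota_inj n hc.symm).symm.symm
      rw [hrepr0]; simp
  rw [Finset.sum_eq_single l0 (fun b hb hbne => hterm b hb hbne)
    (fun h => absurd hl0s h)] at h0
  rw [map_smul, Finsupp.smul_apply, repr_sQ_self] at h0
  simp at h0
  exact hl0g h0

lemma symm_eq_span (n : ℕ) :
    Subalgebra.toSubmodule (symmetricSubalgebra (Fin n) ℤ)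
      = Submodule.span ℤ (Set.range (B0v n)) := by
  have h1 : Subalgebra.toSubmodule (symmetricSubalgebra (Fin n) ℤ)
      = Submodule.map (symmetricSubalgebra (Fin n) ℤ).val.toLinearMap ⊤ := by
    rw [Submodule.map_top]
    ext x
    rw [Subalgebra.mem_toSubmodule, LinearMap.mem_range]
    constructor
    · intro hx
      exact ⟨⟨x, hx⟩, rfl⟩
    · rintro ⟨y, rfl⟩
      exact y.prop
  rw [h1, ← (symBasis n).span_eq, Submodule.map_span]
  congr 1
  rw [← Set.range_comp]
  apply congrArg Set.range
  funext e
  exact symBasis_val n e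

lemma eP_mem_span_vQ (n : ℕ) : ∀ (K : ℕ) (μ : Multiset ℕ), μ.sum * μ.sum - wgt μ < K →
    eP n μ ∈ Submodule.span ℤ (Set.range (vQ n)) := by
  intro K
  induction K with
  | zero => intro μ h; exact absurd h (by omega)
  | succ K ihK =>
    intro μ hK
    by_cases hbig : ∃ x ∈ μ, n < x
    · rw [eP_zero_of_big n μ hbig]; exact Submodule.zero_mem _
    · push_neg at hbig
      obtain ⟨hP, hS, hW⟩ := filter_pos_facts n μ
      set pos := μ.filter (fun x => 0 < x) with hpos
      haveI ha1 : IsAntisymm ℕ (· ≥ ·) := ⟨fun a b h1 h2 => le_antisymm h2 h1⟩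
      haveI ha2 : IsTotal ℕ (· ≥ ·) := ⟨fun a b => (le_total b a).imp id id⟩
      haveI ha3 : IsTrans ℕ (· ≥ ·) := ⟨fun a b c h1 h2 => le_trans h2 h1⟩
      set lam : PartBdd n := ⟨Multiset.sort pos (· ≥ ·), Multiset.pairwise_sort _ _, by
        intro x hx
        rw [Multiset.mem_sort] at hx
        exact ⟨(Multiset.mem_filter.mp hx).2, hbig x (Multiset.mem_filter.mp hx).1⟩⟩ with hlam
      have hpm : pmset n lam = pos := by
        rw [pmset, hlam]
        exact Multiset.sort_eq _ _
      have hkey := key_for_lam n lam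
      rw [hpm] at hkey
      have heq : eP n μ = vQ n lam - (vQ n lam - eP n pos) := by rw [← hP]; ring
      rw [heq]
      apply Submodule.sub_mem
      · exact Submodule.subset_span ⟨lam, rfl⟩
      · refine Submodule.span_le.mpr ?_ hkey
        rintro p ⟨μ'', h1, h2, rfl⟩
        have hb1 : wgt μ'' ≤ μ''.sum * μ''.sum := wgt_le_sq μ''
        apply ihK
        rw [h1, hS] at hb1 ⊢
        rw [hW] at h2
        obtain ⟨S2, hS2⟩ : ∃ s2, μ.sum * μ.sum = s2 := ⟨_, rfl⟩
        rw [hS2] at hb1 hK ⊢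
        omega

/-- The set `{Q̃_λ(X) : λ a partition with λ_1 ≤ n}` is a free `ℤ`-basis of the
ring `ℤ[X]^{S_n}` of symmetric polynomials in `X = (x_1,…,x_n)`: the family is
`ℤ`-linearly independent and its `ℤ`-span is exactly the subring of symmetric
polynomials. -/
theorem statement10 (n : ℕ) (hn : 1 ≤ n) :
    LinearIndependent ℤ (fun lam : PartBdd n => Qt n (lam.val.map fun a => (a : ℤ)))
    ∧ Submodule.span ℤ
        (Set.range fun lam : PartBdd n => Qt n (lam.val.map fun a => (a : ℤ)))
      = Subalgebra.toSubmodule (MvPolynomial.symmetricSubalgebra (Fin n) ℤ) := by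
  constructor
  · have h := (sQ_indep n).map' ((symmetricSubalgebra (Fin n) ℤ).val.toLinearMap)
      (LinearMap.ker_eq_bot.mpr Subtype.val_injective)
    exact h
  · apply le_antisymm
    · rw [Submodule.span_le]
      rintro p ⟨lam, rfl⟩
      exact (Subalgebra.mem_toSubmodule _).mpr (vQ_symm n lam)
    · rw [symm_eq_span]
      refine Submodule.span_le.mpr ?_
      rintro p ⟨d, rfl⟩
      have h1 : B0v n d = eP n (msetOf n d) := by
        rw [eP_cnt n _ (msetOf_mem n d), cnt_msetOf]
      rw [h1]
      exact eP_mem_span_vQ n ((msetOf n d).sum * (msetOf n d).sum - wgt (msetOf n d) + 1)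
        (msetOf n d) (by omega)
end
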